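/- arXiv:1604.02711 — 2 statements merged into one kernel-verified Lean document; each statement's English description precedes it below -/
import Mathlib

section
/- For each n ≥ 3, consider the flow graph G_n on vertices v_0 = s, v_1, ..., v_{n-1} whose edges are (v_{i-1}, v_i) for 1 ≤ i ≤ n−1 together with (v_i, v_{i-1}) for 3 ≤ i ≤ n−1. In G_n, the immediate dominator of v_i is v_{i-1} for all 1 ≤ i ≤ n−1, while in G_n + (s, v_{n-1}) the immediate dominator of v_i is s for all 2 ≤ i ≤ n−1. Hence inserting the single edge (s, v_{n-1}) changes the immediate dominator of n − 2 vertices. -/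
/-!
Every edge of `G_n` raises the label by at most one, so a path from `0` to `v_i` passes
through every `v_j` with `j ≤ i`; since the path `0, 1, …, i` avoids all larger labels, the
dominators of `v_i` are exactly `v_0, …, v_i`, and its immediate dominator is `v_{i-1}`.
After inserting `(s, v_{n-1})` the path `0, n-1, n-2, …, i` meets `0, 1, …, i` only in `0`
and `i`, so `s` is the only proper dominator left.
-/

variable {V : Type*}

/-- `p` is a path (walk) in the digraph `E` from `a` to `b`, given as its list of vertices. -/
def IsPath (E : V → V → Prop) (a b : V) (p : List V) : Prop :=
  p.Chain' E ∧ p.head? = some a ∧ p.getLast? = some b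

/-- `v` is reachable from `s` in the digraph `E`. -/
def Reach (E : V → V → Prop) (s v : V) : Prop := ∃ p, IsPath E s v p

/-- `w` dominates `v` in the flow graph `(E, s)`. -/
def Dom (E : V → V → Prop) (s w v : V) : Prop :=
  Reach E s v ∧ ∀ p, IsPath E s v p → w ∈ p

/-- `dv` is the immediate dominator of `v`: `dv ≠ v`, `dv` dominates `v`, and every
proper dominator of `v` dominates `dv`. -/
def IsIdom (E : V → V → Prop) (s dv v : V) : Prop :=
  dv ≠ v ∧ Dom E s dv v ∧ ∀ u, Dom E s u v → u ≠ v → Dom E s u dv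

/-- `u` is an ancestor of `w` in the tree given by parent function `parent` (reflexive). -/
def Anc (parent : V → V) (u w : V) : Prop := ∃ k, parent^[k] w = u

/-- The tree with parent function `t` has the parent property for flow graph `(E, s)`. -/
def ParentProp (E : V → V → Prop) (s : V) (t : V → V) : Prop :=
  ∀ v w, E v w → Reach E s v → Anc t (t w) v

/-- The tree with parent function `t` has the sibling property for flow graph `(E, s)`. -/
def SiblingProp (E : V → V → Prop) (s : V) (t : V → V) : Prop :=
  ∀ v w, Reach E s v → Reach E s w → v ≠ s → w ≠ s → t v = t w → v ≠ w → ¬ Dom E s v w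

/-- `t` is (the parent function of) a tree rooted at `s` on the reachable vertices. -/
def IsRootedTree (E : V → V → Prop) (s : V) (t : V → V) : Prop :=
  t s = s ∧ ∀ v, Reach E s v → (v ≠ s → Reach E s (t v)) ∧ ∃ k, t^[k] v = s

/-- The pathological graph of Figure 1: vertices `0, …, n-1` with start vertex `0`,
edges `(i-1, i)` for `1 ≤ i ≤ n-1` and `(i, i-1)` for `3 ≤ i ≤ n-1`. -/
def pathoE (n : ℕ) : ℕ → ℕ → Prop := fun a b =>
  (b = a + 1 ∧ 1 ≤ b ∧ b ≤ n - 1) ∨ (3 ≤ a ∧ a ≤ n - 1 ∧ b = a - 1)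

namespace IsPath

variable {E : V → V → Prop} {a b : V} {p : List V}

theorem head_mem (h : IsPath E a b p) : a ∈ p :=
  List.mem_of_mem_head? h.2.1

theorem reach (h : IsPath E a b p) : Reach E a b :=
  ⟨p, h⟩

theorem mono {E' : V → V → Prop} (hE : ∀ x y, E x y → E' x y) (h : IsPath E a b p) :
    IsPath E' a b p :=
  ⟨List.IsChain.imp (fun x y => hE x y) h.1, h.2⟩

theorem cons {x : V} (hx : E x a) (h : IsPath E a b p) : IsPath E x b (x :: p) := by
  refine ⟨List.IsChain.cons h.1 fun y hy => ?_, List.head?_cons, ?_⟩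
  · rw [h.2.1, Option.mem_def, Option.some_inj] at hy
    exact hy ▸ hx
  · obtain ⟨_, _, hb⟩ := h
    cases p with
    | nil => simp at hb
    | cons y q => rwa [List.getLast?_cons_cons]

theorem reverse (h : IsPath (fun x y => E y x) a b p) : IsPath E b a p.reverse :=
  ⟨List.isChain_reverse.2 h.1, by rw [List.head?_reverse, h.2.2],
    by rw [List.getLast?_reverse, h.2.1]⟩

end IsPath

theorem dom_start {E : V → V → Prop} {s v : V} (hv : Reach E s v) : Dom E s s v :=
  ⟨hv, fun _ hp => hp.head_mem⟩

theorem isIdom_start {E : V → V → Prop} {s v : V} (hsv : s ≠ v) (hv : Reach E s v)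
    (h : ∀ u, Dom E s u v → u ≠ v → u = s) : IsIdom E s s v :=
  ⟨hsv, dom_start hv, fun u hu huv => by
    obtain rfl := h u hu huv
    exact dom_start ⟨[u], List.isChain_singleton u, rfl, rfl⟩⟩

section Nat

variable {E : ℕ → ℕ → Prop}

theorem isPath_range' {a b : ℕ} (hab : a ≤ b) (hE : ∀ k, a ≤ k → k < b → E k (k + 1)) :
    IsPath E a b (List.range' a (b + 1 - a)) := by
  obtain ⟨m, rfl⟩ := Nat.exists_eq_add_of_le hab
  rw [show a + m + 1 - a = m + 1 by omega]
  refine ⟨(List.isChain_range' a (m + 1) 1).imp_of_mem_imp fun x y hx hy hxy => ?_, ?_, ?_⟩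
  · rw [List.mem_range'_1] at hx hy
    exact hxy ▸ hE x (by omega) (by omega)
  · rw [List.range'_succ, List.head?_cons]
  · rw [List.range'_concat, List.getLast?_concat, one_mul]

theorem IsPath.mem_of_mem_Icc (hE : ∀ x y, E x y → y ≤ x + 1) {a c j : ℕ} {p : List ℕ}
    (hp : IsPath E a c p) (hj : j ∈ Set.Icc a c) : j ∈ p := by
  induction p generalizing a with
  | nil => simp [IsPath] at hp
  | cons x q ih =>
    obtain ⟨hchain, hhead, hlast⟩ := hp
    obtain rfl : x = a := Option.some_inj.1 hhead
    rcases eq_or_lt_of_le hj.1 with rfl | hxj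
    · exact List.mem_cons_self
    cases q with
    | nil =>
      rw [List.getLast?_singleton, Option.some_inj] at hlast
      exact absurd hj.2 (by omega)
    | cons y r =>
      obtain ⟨hxy, hchain⟩ := List.isChain_cons_cons.1 hchain
      rw [List.getLast?_cons_cons] at hlast
      have hyj : y ≤ j := (hE x y hxy).trans hxj
      exact List.mem_cons_of_mem _ <| ih ⟨hchain, List.head?_cons, hlast⟩ ⟨hyj, hj.2⟩

theorem dom_of_mem_Icc (hE : ∀ x y, E x y → y ≤ x + 1) {a j v : ℕ} (hv : Reach E a v)
    (hj : j ∈ Set.Icc a v) : Dom E a j v :=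
  ⟨hv, fun _ hp => hp.mem_of_mem_Icc hE hj⟩

end Nat

section Patho

variable {n : ℕ}

theorem pathoE_le_succ (x y : ℕ) (h : pathoE n x y) : y ≤ x + 1 := by
  unfold pathoE at h
  omega

theorem isPath_pathoE_up {i : ℕ} (hi : i ≤ n - 1) :
    IsPath (pathoE n) 0 i (List.range' 0 (i + 1)) :=
  isPath_range' (Nat.zero_le i) fun _ _ hk => Or.inl ⟨rfl, by omega, by omega⟩

theorem isIdom_pathoE {i : ℕ} (hi₁ : 1 ≤ i) (hi : i ≤ n - 1) :
    IsIdom (pathoE n) 0 (i - 1) i := by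
  refine ⟨by omega, dom_of_mem_Icc pathoE_le_succ (isPath_pathoE_up hi).reach
    ⟨Nat.zero_le _, by omega⟩, fun u hu hui => ?_⟩
  have hu_le := List.mem_range'_1.1 (hu.2 _ (isPath_pathoE_up hi))
  exact dom_of_mem_Icc pathoE_le_succ (isPath_pathoE_up (by omega)).reach
    ⟨Nat.zero_le _, by omega⟩

theorem isIdom_pathoE_insert {i : ℕ} (hi₂ : 2 ≤ i) (hi : i ≤ n - 1) :
    IsIdom (fun a b => pathoE n a b ∨ (a = 0 ∧ b = n - 1)) 0 0 i := by
  have hup := (isPath_pathoE_up hi).mono (E' := fun a b => pathoE n a b ∨ (a = 0 ∧ b = n - 1))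
    fun _ _ => Or.inl
  have hdown : IsPath (fun a b => pathoE n a b ∨ (a = 0 ∧ b = n - 1)) 0 i
      (0 :: (List.range' i (n - 1 + 1 - i)).reverse) :=
    IsPath.cons (Or.inr ⟨rfl, rfl⟩) <| IsPath.reverse <|
      isPath_range' hi fun _ hk hk' => Or.inl (Or.inr ⟨by omega, by omega, by omega⟩)
  refine isIdom_start (by omega) hup.reach fun u hu hui => ?_
  have hu_up := List.mem_range'_1.1 (hu.2 _ hup)
  have hu_down := hu.2 _ hdown
  simp only [List.mem_cons, List.mem_reverse, List.mem_range'_1] at hu_down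
  omega

end Patho

theorem pathological_insertion_general (n : ℕ) :
    (∀ i, 1 ≤ i → i ≤ n - 1 → IsIdom (pathoE n) 0 (i - 1) i) ∧
    (∀ i, 2 ≤ i → i ≤ n - 1 →
      IsIdom (fun a b => pathoE n a b ∨ (a = 0 ∧ b = n - 1)) 0 0 i) ∧
    (Finset.Icc 2 (n - 1)).card = n - 2 :=
  ⟨fun _ => isIdom_pathoE, fun _ => isIdom_pathoE_insert, by rw [Nat.card_Icc]; omega⟩

/-- In `G_n` the immediate dominator of `v_i` is `v_{i-1}` for all `1 ≤ i ≤ n-1`;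
after inserting the edge `(s, v_{n-1})`, the immediate dominator of `v_i` is `s`
for all `2 ≤ i ≤ n-1`; hence the insertion changes the immediate dominator
of `n - 2` vertices. -/
theorem pathological_insertion (n : ℕ) (hn : 3 ≤ n) :
    (∀ i, 1 ≤ i → i ≤ n - 1 → IsIdom (pathoE n) 0 (i - 1) i) ∧
    (∀ i, 2 ≤ i → i ≤ n - 1 →
      IsIdom (fun a b => pathoE n a b ∨ (a = 0 ∧ b = n - 1)) 0 0 i) ∧
    (Finset.Icc 2 (n - 1)).card = n - 2 :=
  pathological_insertion_general n
end

section
/- Let G' = G − (x, y) where x is reachable in G and y remains reachable in G'. If the dominator trees differ (D' ≠ D) and (d(y), y) is not an edge of G, then there exist edges (u, y) and (w, y) of G entering y with sp_D(u, y) ≠ sp_D(w, y). -/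
variable {V : Type*}

/-- `c` is the support `sp_D(v, w)` of the edge `(v, w)` with respect to the dominator
tree with parent function `d`: it is `v` itself if `v = d w`, and otherwise the child
of `d w` that is an ancestor of `v`. -/
def IsSupport (E : V → V → Prop) (s : V) (d : V → V) (v w c : V) : Prop :=
  (v = d w ∧ c = v) ∨
  (v ≠ d w ∧ Reach E s c ∧ c ≠ s ∧ d c = d w ∧ Anc d c v)

/-!
If every edge `(u, y)` had the same support `c`, then, since `d y` dominates each such `u` and
differs from it, climbing the dominator tree from `u` would show that `c` is a child of `d y`
dominating `u`. Every path to `y` enters `y` along one of these edges, so `c` would dominate `y`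
and hence `d y`, which is impossible for a child of `d y`. This needs `y ≠ s`; when `y = s`,
deleting `(x, y)` changes neither reachability nor dominance, so the dominator tree stays the same.
-/

abbrev deleteEdge (E : V → V → Prop) (x y : V) : V → V → Prop :=
  fun p q => E p q ∧ ¬ (p = x ∧ q = y)

section Paths

variable {E E' : V → V → Prop} {s a b u v w : V} {p : List V}

theorem IsPath.mono_s18 (h : ∀ a b, E a b → E' a b) (hp : IsPath E a b p) : IsPath E' a b p :=
  ⟨hp.1.imp h, hp.2⟩

theorem Reach.mono_s18 (h : ∀ a b, E a b → E' a b) (hr : Reach E a b) : Reach E' a b :=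
  hr.imp fun _ hp => hp.mono_s18 h

theorem IsPath.singleton : IsPath E s s [s] := ⟨List.isChain_singleton s, rfl, rfl⟩

theorem IsPath.ne_nil (hp : IsPath E a b p) : p ≠ [] := by
  rintro rfl; simp [IsPath] at hp

theorem IsPath.getLast_mem (hp : IsPath E a b p) : b ∈ p := by
  have h := hp.2.2
  rw [List.getLast?_eq_some_getLast hp.ne_nil, Option.some_inj] at h
  exact h ▸ List.getLast_mem _

theorem IsPath.prefix {l r : List V} (hp : IsPath E s v (l ++ w :: r)) :
    IsPath E s w (l ++ [w]) := by
  obtain ⟨hc, hh, -⟩ := hp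
  rw [show l ++ w :: r = (l ++ [w]) ++ r by simp] at hc
  refine ⟨(List.isChain_append.mp hc).1, ?_, by simp⟩
  cases l <;> simpa using hh

theorem IsPath.snoc (hp : IsPath E a u p) (he : E u b) : IsPath E a b (p ++ [b]) := by
  obtain ⟨hc, hh, hl⟩ := hp
  refine ⟨List.isChain_append.mpr ⟨hc, List.isChain_singleton _, ?_⟩, ?_, by simp⟩
  · intro x hx y hy
    rw [hl, Option.mem_some_iff] at hx
    simp only [List.head?_cons, Option.mem_some_iff] at hy
    exact hx ▸ hy ▸ he
  · rw [List.head?_append_of_ne_nil _ (IsPath.ne_nil ⟨hc, hh, hl⟩), hh]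

theorem IsPath.reach_of_mem (hp : IsPath E s v p) (h : w ∈ p) : Reach E s w := by
  obtain ⟨l, r, rfl⟩ := List.append_of_mem h
  exact ⟨l ++ [w], hp.prefix⟩

theorem IsPath.exists_pred {y : V} (hp : IsPath E s y p) (hys : y ≠ s) :
    ∃ q u, IsPath E s u q ∧ E u y ∧ y ∉ q ∧ q ⊆ p := by
  classical
  obtain ⟨l, r, hyl, rfl, -⟩ := List.exists_erase_eq hp.getLast_mem
  have hl : l ≠ [] := by
    rintro rfl
    exact hys (by simpa using hp.2.1)
  obtain ⟨hcl, -, hjoin⟩ := List.isChain_append.mp hp.1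
  refine ⟨l, l.getLast hl, ⟨hcl, ?_, List.getLast?_eq_some_getLast hl⟩, ?_, hyl, ?_⟩
  · simpa [List.head?_append_of_ne_nil _ hl] using hp.2.1
  · exact hjoin _ (List.getLast?_eq_some_getLast hl) y rfl
  · exact List.subset_append_left _ _

end Paths

section Dominance

variable {E : V → V → Prop} {s a b c u v : V}

theorem Dom.reach_left (h : Dom E s a v) : Reach E s a := by
  obtain ⟨p, hp⟩ := h.1
  exact hp.reach_of_mem (h.2 p hp)

theorem Dom.refl (h : Reach E s v) : Dom E s v v :=
  ⟨h, fun _ hp => hp.getLast_mem⟩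

theorem Dom.eq_of_start (h : Dom E s a s) : a = s := by
  simpa using h.2 [s] IsPath.singleton

theorem Dom.trans (hab : Dom E s a b) (hbc : Dom E s b c) : Dom E s a c := by
  refine ⟨hbc.1, fun p hp => ?_⟩
  obtain ⟨l, r, rfl⟩ := List.append_of_mem (hbc.2 p hp)
  rcases List.mem_append.mp (hab.2 _ hp.prefix) with h | h
  · exact List.mem_append_left _ h
  · simp_all

/-- Cutting a path to `b` at its first `a` and then at its first `b` leaves a path to `b`
avoiding `a`. -/
theorem Dom.antisymm (hab : Dom E s a b) (hba : Dom E s b a) : a = b := by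
  classical
  by_contra hne
  obtain ⟨p, hp⟩ := hab.1
  obtain ⟨l, r, hal, rfl, -⟩ := List.exists_erase_eq (hab.2 p hp)
  have hbl : b ∈ l := by simpa [Ne.symm hne] using hba.2 _ hp.prefix
  obtain ⟨l₁, r₁, rfl⟩ := List.append_of_mem hbl
  have hpa : IsPath E s a (l₁ ++ b :: (r₁ ++ [a])) := by simpa using hp.prefix
  have : a ∈ l₁ := by simpa [hne] using hab.2 _ hpa.prefix
  exact hal (List.mem_append_left _ this)

theorem Dom.of_edge (hay : Dom E s a v) (hne : a ≠ v) (hu : Reach E s u) (he : E u v) :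
    Dom E s a u := by
  refine ⟨hu, fun p hp => ?_⟩
  simpa [hne] using hay.2 _ (hp.snoc he)

theorem Dom.of_forall_pred (hv : Reach E s v) (hvs : v ≠ s)
    (h : ∀ u, Reach E s u → E u v → Dom E s a u) : Dom E s a v := by
  refine ⟨hv, fun p hp => ?_⟩
  obtain ⟨q, u, hq, he, -, hqp⟩ := hp.exists_pred hvs
  exact hqp ((h u ⟨q, hq⟩ he).2 q hq)

theorem IsIdom.unique (ha : IsIdom E s a v) (hb : IsIdom E s b v) : a = b :=
  (hb.2.2 a ha.2.1 ha.1).antisymm (ha.2.2 b hb.2.1 hb.1)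

theorem IsIdom.not_dom (ha : IsIdom E s a v) : ¬ Dom E s v a :=
  fun h => ha.1 (ha.2.1.antisymm h)

end Dominance

section DeleteEdgeIntoStart

variable {E : V → V → Prop} {s x a v : V} {p : List V}

/-- A path from `s` using the edge `(x, s)` can be shortened to its part after that edge. -/
theorem IsPath.exists_deleteEdge_start (hp : IsPath E s v p) :
    ∃ q, IsPath (deleteEdge E x s) s v q ∧ q ⊆ p := by
  induction hn : p.length using Nat.strong_induction_on generalizing p with
  | _ n ih =>
  by_cases hc : p.IsChain (deleteEdge E x s)
  · exact ⟨p, ⟨hc, hp.2⟩, List.Subset.refl _⟩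
  obtain ⟨a, b, l, r, rfl, hab⟩ : ∃ a b l r, p = l ++ a :: b :: r ∧ ¬ deleteEdge E x s a b := by
    simpa [List.isChain_iff_forall_rel_of_append_cons_cons] using hc
  obtain ⟨-, hEab, hr⟩ := List.isChain_append_cons_cons.mp hp.1
  obtain ⟨rfl, rfl⟩ : x = a ∧ s = b := by simpa [hEab, eq_comm] using hab
  have hsr : IsPath E s v (s :: r) :=
    ⟨hr, rfl, by rw [← hp.2.2, List.getLast?_append_of_ne_nil _ (List.cons_ne_nil _ _)]; rfl⟩
  obtain ⟨q, hq, hqr⟩ := ih _ (by simp [← hn]; omega) hsr rfl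
  exact ⟨q, hq,
    List.Subset.trans hqr (List.subset_append_of_subset_right _ (List.subset_cons_self _ _))⟩

theorem reach_deleteEdge_start_iff : Reach (deleteEdge E x s) s v ↔ Reach E s v :=
  ⟨Reach.mono_s18 fun _ _ h => h.1, fun ⟨_, hp⟩ => hp.exists_deleteEdge_start.imp fun _ h => h.1⟩

theorem dom_deleteEdge_start_iff : Dom (deleteEdge E x s) s a v ↔ Dom E s a v := by
  refine ⟨fun h => ⟨reach_deleteEdge_start_iff.mp h.1, fun p hp => ?_⟩,
    fun h => ⟨reach_deleteEdge_start_iff.mpr h.1, fun p hp => h.2 p (hp.mono_s18 fun _ _ h => h.1)⟩⟩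
  obtain ⟨q, hq, hqp⟩ := hp.exists_deleteEdge_start (x := x)
  exact hqp (h.2 q hq)

theorem isIdom_deleteEdge_start_iff : IsIdom (deleteEdge E x s) s a v ↔ IsIdom E s a v := by
  simp only [IsIdom, dom_deleteEdge_start_iff]

end DeleteEdgeIntoStart

section DominatorTree

variable {E : V → V → Prop} {s a u y : V} {d : V → V}

/-- Climb the dominator tree from `u` until the parent is `a`; termination is by the length of
a path to `u`, which visits `d u` strictly before its end. -/
theorem exists_child_dom_of_dom (hd : ∀ u, Reach E s u → u ≠ s → IsIdom E s (d u) u)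
    (ha : Dom E s a u) (hau : a ≠ u) :
    ∃ c, c ≠ s ∧ d c = a ∧ Anc d c u ∧ Dom E s c u := by
  obtain ⟨p, hp⟩ := ha.1
  induction hn : p.length using Nat.strong_induction_on generalizing u p with
  | _ n ih =>
  have hus : u ≠ s := by
    rintro rfl
    exact hau ha.eq_of_start
  have hidu := hd u ⟨p, hp⟩ hus
  by_cases hdu : d u = a
  · exact ⟨u, hus, hdu, ⟨0, rfl⟩, Dom.refl ⟨p, hp⟩⟩
  obtain ⟨l, r, rfl⟩ := List.append_of_mem (hidu.2.1.2 p hp)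
  have hr : r ≠ [] := by
    rintro rfl
    exact hidu.1 (by simpa using hp.2.2)
  have hlen : (l ++ [d u]).length < n := by
    have := List.length_pos_iff.mpr hr
    simp [← hn]
    omega
  obtain ⟨c, hcs, hca, ⟨k, hk⟩, hcdu⟩ :=
    ih _ hlen (hidu.2.2 a ha hau) (Ne.symm hdu) _ hp.prefix rfl
  exact ⟨c, hcs, hca, ⟨k + 1, by rw [Function.iterate_succ_apply, hk]⟩, hcdu.trans hidu.2.1⟩

theorem exists_support_dom (hd : ∀ u, Reach E s u → u ≠ s → IsIdom E s (d u) u)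
    (hy : Reach E s y) (hys : y ≠ s) (hu : Reach E s u) (he : E u y) (hne : u ≠ d y) :
    ∃ c, c ≠ s ∧ d c = d y ∧ IsSupport E s d u y c ∧ Dom E s c u := by
  have hidy := hd y hy hys
  obtain ⟨c, hcs, hcd, hanc, hcu⟩ :=
    exists_child_dom_of_dom hd (hidy.2.1.of_edge hidy.1 hu he) (Ne.symm hne)
  exact ⟨c, hcs, hcd, Or.inr ⟨hne, hcu.reach_left, hcs, hcd, hanc⟩, hcu⟩

theorem exists_support_ne (hd : ∀ u, Reach E s u → u ≠ s → IsIdom E s (d u) u)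
    (hy : Reach E s y) (hys : y ≠ s) (hnoedge : ¬ E (d y) y) :
    ∃ u w, E u y ∧ E w y ∧
      ∃ cu cw, IsSupport E s d u y cu ∧ IsSupport E s d w y cw ∧ cu ≠ cw := by
  by_contra! hsame
  have support u (hu : Reach E s u) (he : E u y) :=
    exists_support_dom hd hy hys hu he fun h => hnoedge (h ▸ he)
  obtain ⟨p, hp⟩ := hy
  obtain ⟨q, u, hq, he, hyq, -⟩ := hp.exists_pred hys
  obtain ⟨c, hcs, hcd, hc, hcu⟩ := support u ⟨q, hq⟩ he
  have hcy : Dom E s c y := Dom.of_forall_pred ⟨p, hp⟩ hys fun u' hu' he' => by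
    obtain ⟨c', -, -, hc', hc'u⟩ := support u' hu' he'
    rwa [hsame u' u he' he c' c hc' hc] at hc'u
  have hcy' : c ≠ y := by
    rintro rfl
    exact hyq (hcu.2 q hq)
  exact (hd c hcu.reach_left hcs).not_dom (hcd ▸ (hd y ⟨p, hp⟩ hys).2.2 c hcy hcy')

end DominatorTree

theorem deletion_support_condition_general (E : V → V → Prop) (s x y : V)
    (d d' : V → V)
    (hd : ∀ u, Reach E s u → u ≠ s → IsIdom E s (d u) u)
    (hd' : ∀ u, Reach (fun p q => E p q ∧ ¬ (p = x ∧ q = y)) s u → u ≠ s →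
      IsIdom (fun p q => E p q ∧ ¬ (p = x ∧ q = y)) s (d' u) u)
    (hy : Reach (fun p q => E p q ∧ ¬ (p = x ∧ q = y)) s y)
    (hdiff : (∃ v, Reach E s v ∧ ¬ Reach (fun p q => E p q ∧ ¬ (p = x ∧ q = y)) s v) ∨
      (∃ v, Reach (fun p q => E p q ∧ ¬ (p = x ∧ q = y)) s v ∧ v ≠ s ∧ d' v ≠ d v))
    (hnoedge : ¬ E (d y) y) :
    ∃ u w, E u y ∧ E w y ∧
      ∃ cu cw, IsSupport E s d u y cu ∧ IsSupport E s d w y cw ∧ cu ≠ cw := by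
  rcases eq_or_ne y s with rfl | hys
  · exfalso
    rcases hdiff with ⟨v, hv, hv'⟩ | ⟨v, hv, hvs, hne⟩
    · exact hv' (reach_deleteEdge_start_iff.mpr hv)
    · exact hne ((isIdom_deleteEdge_start_iff.mp (hd' v hv hvs)).unique
        (hd v (reach_deleteEdge_start_iff.mp hv) hvs))
  · exact exists_support_ne hd (hy.mono_s18 fun _ _ h => h.1) hys hnoedge

/-- If deleting edge `(x, y)` (with `x` and `y` still reachable afterwards) changes the
dominator tree and `(d y, y)` is not an edge of `G`, then there exist edges `(u, y)` and
`(w, y)` of `G` with different supports with respect to the dominator tree of `G`. -/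
theorem deletion_support_condition (E : V → V → Prop) (s x y : V)
    (d d' : V → V)
    (hd : ∀ u, Reach E s u → u ≠ s → IsIdom E s (d u) u)
    (hd' : ∀ u, Reach (fun p q => E p q ∧ ¬ (p = x ∧ q = y)) s u → u ≠ s →
      IsIdom (fun p q => E p q ∧ ¬ (p = x ∧ q = y)) s (d' u) u)
    (hx : Reach (fun p q => E p q ∧ ¬ (p = x ∧ q = y)) s x)
    (hy : Reach (fun p q => E p q ∧ ¬ (p = x ∧ q = y)) s y)
    (hdiff : (∃ v, Reach E s v ∧ ¬ Reach (fun p q => E p q ∧ ¬ (p = x ∧ q = y)) s v) ∨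
      (∃ v, Reach (fun p q => E p q ∧ ¬ (p = x ∧ q = y)) s v ∧ v ≠ s ∧ d' v ≠ d v))
    (hnoedge : ¬ E (d y) y) :
    ∃ u w, E u y ∧ E w y ∧
      ∃ cu cw, IsSupport E s d u y cu ∧ IsSupport E s d w y cw ∧ cu ≠ cw :=
  deletion_support_condition_general E s x y d d' hd hd' hy hdiff hnoedge
end
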